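/- arXiv:1705.08308 — 3 statements merged into one kernel-verified Lean document; each statement's English description precedes it below -/
import Mathlib

section
/- Let N ≥ 4 and let x ∈ ℝ^(N choose 2) be indexed by pairs i<j with entries λ_{ij}. Suppose that for every 4-element subset I = {i,j,k,l} of {1,…,N} the projection of x to the coordinates indexed by pairs in I lies in the subspace U_I = { (μ_a + μ_b)_{a<b ∈ I} : μ ∈ ℝ^I }. Then x lies in the subspace U_N = { (μ_i + μ_j)_{i<j} : μ ∈ ℝ^N }. -/
/-!
Symmetrize `x` to `y a b = x (min a b) (max a b)`. Membership in `U_I` on the 4-set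
`I = {a, b, c, d}` gives the four-point identity `y a b + y c d = y a c + y b d`, and this
identity alone already puts `y` in `U`. The weight of a vertex `a` is then read off any triangle `a b c` as
`(y a b + y a c - y b c) / 2`: the four-point identity makes this independent of the choice of
`b` and `c`, and adding the readings of `a` and `b` on one common triangle gives back `y a b`.
-/

section FourPoint

variable {ι : Type*} (y : ι → ι → ℝ)

noncomputable def triangleWeight (a b c : ι) : ℝ := (y a b + y a c - y b c) / 2

variable {y} (hsymm : ∀ a b, y a b = y b a)
  (hfour : ∀ a b c d, a ≠ b → a ≠ c → a ≠ d → b ≠ c → b ≠ d → c ≠ d →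
    y a b + y c d = y a c + y b d)
include hsymm

theorem triangleWeight_comm (a b c : ι) : triangleWeight y a b c = triangleWeight y a c b := by
  simp only [triangleWeight, hsymm b c]
  ring

include hfour

theorem triangleWeight_replace {a b b' c : ι} (hab : a ≠ b) (hab' : a ≠ b') (hac : a ≠ c)
    (hbc : b ≠ c) (hb'c : b' ≠ c) : triangleWeight y a b c = triangleWeight y a b' c := by
  rcases eq_or_ne b b' with rfl | hbb'
  · rfl
  have := hfour a b b' c hab hab' hac hbb' hbc hb'c
  simp only [triangleWeight, hsymm b' c] at this ⊢
  linarith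

theorem triangleWeight_eq {a b c b' c' : ι} (hab : a ≠ b) (hac : a ≠ c) (hbc : b ≠ c)
    (hab' : a ≠ b') (hac' : a ≠ c') (hbc' : b' ≠ c') :
    triangleWeight y a b c = triangleWeight y a b' c' := by
  rcases eq_or_ne b' c with rfl | hb'c
  · rw [triangleWeight_replace hsymm hfour hab hac' hac hbc hbc'.symm, triangleWeight_comm hsymm]
  · rw [triangleWeight_replace hsymm hfour hab hab' hac hbc hb'c, triangleWeight_comm hsymm,
      triangleWeight_replace hsymm hfour hac hac' hab' hb'c.symm hbc'.symm,
      triangleWeight_comm hsymm]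

theorem exists_eq_add_of_four_point [Fintype ι] (hι : 3 ≤ Fintype.card ι) :
    ∃ μ : ι → ℝ, ∀ a b, a ≠ b → y a b = μ a + μ b := by
  classical
  have third (a b : ι) : ∃ c, c ≠ a ∧ c ≠ b := by
    obtain ⟨c, -, hc⟩ := Finset.exists_mem_notMem_of_card_lt_card
      (s := {a, b}) (t := Finset.univ) (Finset.card_le_two.trans_lt hι)
    simp only [Finset.mem_insert, Finset.mem_singleton, not_or] at hc
    exact ⟨c, hc⟩
  have triangle (a : ι) : ∃ b c, a ≠ b ∧ a ≠ c ∧ b ≠ c := by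
    obtain ⟨b, hb, -⟩ := third a a
    obtain ⟨c, hca, hcb⟩ := third a b
    exact ⟨b, c, hb.symm, hca.symm, hcb.symm⟩
  choose p q hp using triangle
  refine ⟨fun a => triangleWeight y a (p a) (q a), fun a b hab => ?_⟩
  obtain ⟨c, hca, hcb⟩ := third a b
  obtain ⟨hap, haq, hpq⟩ := hp a
  obtain ⟨hbp, hbq, hpq'⟩ := hp b
  dsimp only
  rw [triangleWeight_eq hsymm hfour hap haq hpq hab hca.symm hcb.symm,
    triangleWeight_eq hsymm hfour hbp hbq hpq' hab.symm hcb.symm hca.symm]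
  simp only [triangleWeight, hsymm b a, hsymm b c]
  ring

end FourPoint

section LinearOrder

variable {ι : Type*} [LinearOrder ι]

theorem min_max_eq_add_of_lt_eq_add {x : ι → ι → ℝ} {μ : ι → ℝ} {I : Finset ι}
    (hμ : ∀ a ∈ I, ∀ b ∈ I, a < b → x a b = μ a + μ b) {a b : ι} (ha : a ∈ I) (hb : b ∈ I)
    (hab : a ≠ b) : x (min a b) (max a b) = μ a + μ b := by
  rcases hab.lt_or_gt with h | h
  · rw [min_eq_left h.le, max_eq_right h.le, hμ a ha b hb h]
  · rw [min_eq_right h.le, max_eq_left h.le, hμ b hb a ha h, add_comm]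

theorem four_point_of_forall_card_eq_four {x : ι → ι → ℝ}
    (h : ∀ I : Finset ι, I.card = 4 → ∃ μ : ι → ℝ, ∀ a ∈ I, ∀ b ∈ I, a < b → x a b = μ a + μ b)
    (a b c d : ι) (hab : a ≠ b) (hac : a ≠ c) (had : a ≠ d) (hbc : b ≠ c) (hbd : b ≠ d)
    (hcd : c ≠ d) :
    x (min a b) (max a b) + x (min c d) (max c d) =
      x (min a c) (max a c) + x (min b d) (max b d) := by
  obtain ⟨μ, hμ⟩ := h {a, b, c, d}
    (Finset.card_eq_four.mpr ⟨a, b, c, d, hab, hac, had, hbc, hbd, hcd, rfl⟩)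
  rw [min_max_eq_add_of_lt_eq_add hμ (by simp) (by simp) hab,
    min_max_eq_add_of_lt_eq_add hμ (by simp) (by simp) hcd,
    min_max_eq_add_of_lt_eq_add hμ (by simp) (by simp) hac,
    min_max_eq_add_of_lt_eq_add hμ (by simp) (by simp) hbd]
  ring

end LinearOrder

/-- If a vector `x ∈ ℝ^(N choose 2)` (given by entries `x i j` for `i < j`) restricts,
on every 4-element subset `I` of the index set, to an element of
`U_I = {(μ_a + μ_b)_{a<b∈I}}`, then `x ∈ U_N = {(μ_i + μ_j)_{i<j}}`. -/
theorem stmt0 (N : ℕ) (hN : 4 ≤ N) (x : Fin N → Fin N → ℝ)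
    (h : ∀ I : Finset (Fin N), I.card = 4 →
      ∃ μ : Fin N → ℝ, ∀ a ∈ I, ∀ b ∈ I, a < b → x a b = μ a + μ b) :
    ∃ μ : Fin N → ℝ, ∀ a b : Fin N, a < b → x a b = μ a + μ b := by
  obtain ⟨μ, hμ⟩ := exists_eq_add_of_four_point (y := fun a b => x (min a b) (max a b))
    (fun a b => by simp only [min_comm, max_comm]) (four_point_of_forall_card_eq_four h)
    (by rw [Fintype.card_fin]; omega)
  refine ⟨μ, fun a b hab => ?_⟩
  simpa [min_eq_left hab.le, max_eq_right hab.le] using hμ a b hab.ne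
end

section
/- Let m_i, m_j be positive integers and d₁ = m_i + m_j. For λ ∈ ℂ*, the degree-d₁ cover π(z₀:z₁) = ((z₀−z₁)^{d₁} : λ z₀^{m_j} z₁^{m_i}) of ℙ¹ has the property that the equation π(z₀:z₁) = (d₁^{d₁} : (−1)^{m_i} m_j^{m_j} m_i^{m_i} λ) has a double root at (m_j : −m_i). -/
open Polynomial

/-!
With `a = m_i`, `b = m_j`, `d = a + b`, the candidate double root is `r = -b/a`, where
`r - 1 = -d/a`. The polynomial has the shape `A (X - 1)^d - B X^b`, whose value at `r`
vanishes by the choice of `A` and `B`, and whose derivative at `r` is, up to the factor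
`r (r - 1)`, the value times `d r - b (r - 1) = a r + b = 0`.
-/

theorem sq_X_sub_C_dvd_of_isRoot_of_isRoot_derivative {R : Type*} [CommRing R] {p : R[X]}
    {t : R} (h : p.IsRoot t) (h' : (derivative p).IsRoot t) : (X - C t) ^ 2 ∣ p := by
  rcases eq_or_ne p 0 with rfl | hp
  · exact dvd_zero _
  rw [← le_rootMultiplicity_iff hp]
  exact (one_lt_rootMultiplicity_iff_isRoot hp).mpr ⟨h, h'⟩

theorem natCast_mul_pow_sub_one_mul {R : Type*} [Semiring R] (n : ℕ) (x : R) :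
    (n : R) * x ^ (n - 1) * x = n * x ^ n := by
  cases n <;> simp [pow_succ, mul_assoc]

theorem sq_X_sub_C_dvd_sub_pow_of_eval_eq {K : Type*} [Field K] {A B r : K} {d b : ℕ}
    (hr₀ : r ≠ 0) (hr₁ : r ≠ 1) (hval : A * (r - 1) ^ d = B * r ^ b)
    (hlog : (d : K) * r = b * (r - 1)) :
    (X - C r) ^ 2 ∣ C A * (X - 1) ^ d - C B * X ^ b := by
  apply sq_X_sub_C_dvd_of_isRoot_of_isRoot_derivative
  · simp [hval]
  · have hscaled : (A * (d * (r - 1) ^ (d - 1)) - B * (b * r ^ (b - 1))) * (r * (r - 1)) = 0 :=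
      calc _ = A * (d * (r - 1) ^ (d - 1) * (r - 1)) * r
                - B * (b * r ^ (b - 1) * r) * (r - 1) := by ring
        _ = A * (r - 1) ^ d * (d * r) - B * r ^ b * (b * (r - 1)) := by
              rw [natCast_mul_pow_sub_one_mul, natCast_mul_pow_sub_one_mul]
              ring
        _ = 0 := by rw [hval, hlog, sub_self]
    have hderiv := (mul_eq_zero.mp hscaled).resolve_right
      (mul_ne_zero hr₀ (sub_ne_zero.mpr hr₁))
    simpa [IsRoot, derivative_pow, derivative_X_pow] using hderiv

theorem stmt10_general (mi mj : ℕ) (hi : 0 < mi) (hj : 0 < mj) (lam : ℂ) :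
    (C ((mi : ℂ)) * X + C ((mj : ℂ))) ^ 2 ∣
      C ((-1 : ℂ) ^ mi * (mj : ℂ) ^ mj * (mi : ℂ) ^ mi * lam) * (X - 1) ^ (mi + mj) -
        C (((mi + mj : ℕ) : ℂ) ^ (mi + mj) * lam) * X ^ mj := by
  have ha : (mi : ℂ) ≠ 0 := Nat.cast_ne_zero.mpr hi.ne'
  have hb : (mj : ℂ) ≠ 0 := Nat.cast_ne_zero.mpr hj.ne'
  have hd : ((mi + mj : ℕ) : ℂ) ≠ 0 := Nat.cast_ne_zero.mpr (by omega)
  set r : ℂ := -mj / mi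
  have hr₁ : r - 1 = -((mi + mj : ℕ) : ℂ) / mi := by
    simp only [r]; push_cast; field_simp; ring
  have hlin : C (mi : ℂ) * X + C (mj : ℂ) = C (mi : ℂ) * (X - C r) := by
    rw [mul_sub, ← C_mul, mul_div_cancel₀ _ ha, C_neg, sub_neg_eq_add]
  rw [hlin, mul_pow, ← C_pow]
  refine (isUnit_C.mpr (IsUnit.pow 2 ha.isUnit)).mul_left_dvd.mpr
    (sq_X_sub_C_dvd_sub_pow_of_eval_eq (by simp [r, ha, hb]) ?_ ?_ ?_)
  · rw [← sub_ne_zero, hr₁]; exact div_ne_zero (neg_ne_zero.mpr hd) ha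
  · have hsign : ((-1 : ℂ) ^ mi) ^ 2 = 1 := by rw [← pow_mul, mul_comm, pow_mul]; norm_num
    simp only [hr₁, r]
    rw [neg_div, neg_div, neg_pow (((mi + mj : ℕ) : ℂ) / mi), neg_pow ((mj : ℂ) / mi), div_pow,
      div_pow, pow_add (-1 : ℂ), pow_add (mi : ℂ)]
    field_simp
    rw [hsign, one_mul]
  · rw [hr₁]; simp only [r]; push_cast; field_simp

/-- For the degree-`d₁ = m_i + m_j` cover `π(z₀:z₁) = ((z₀−z₁)^{d₁} : λ z₀^{m_j} z₁^{m_i})`,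
the equation `π(z₀:z₁) = (d₁^{d₁} : (−1)^{m_i} m_j^{m_j} m_i^{m_i} λ)` has a double root
at `(m_j : −m_i)`: the (dehomogenized at `z₁ = 1`) polynomial
`(−1)^{m_i} m_j^{m_j} m_i^{m_i} λ (z₀−1)^{d₁} − d₁^{d₁} λ z₀^{m_j}` is divisible by
`(m_i z₀ + m_j)²`. -/
theorem stmt10 (mi mj : ℕ) (hi : 0 < mi) (hj : 0 < mj) (lam : ℂ) (hlam : lam ≠ 0) :
    (C ((mi : ℂ)) * X + C ((mj : ℂ))) ^ 2 ∣
      C ((-1 : ℂ) ^ mi * (mj : ℂ) ^ mj * (mi : ℂ) ^ mi * lam) * (X - 1) ^ (mi + mj) -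
        C (((mi + mj : ℕ) : ℂ) ^ (mi + mj) * lam) * X ^ mj :=
  stmt10_general mi mj hi hj lam
end

section
/- Fix d₁, d₂ ≥ 1 with d = d₁ + d₂. The number of degree-d covers π : ℙ¹ → ℙ¹ with π^*(0) = d₁·x_i + d₂·x_l, π^*(∞) = d·x_p, π(x_j) = π(x_k) = 1 with x_j ≠ x_k, and no other ramification beyond that forced over 0 and ∞, up to isomorphism fixing the marked points, is d − 1. -/
/-- Data of a degree-`d` cover `π(z) = c z^d` of `ℙ¹` totally ramified over `0` and `∞`
(the component with the ramification profile `(d₁,d₂)` over `0` being collapsed),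
with the marked point `x_p` over `∞`, and two distinct marked points `x_j ≠ x_k`
mapping to `1`.  The data is the triple `(c, x_j, x_k)`. -/
def TypeThreeCover (d : ℕ) : Type :=
  {t : ℂ × ℂ × ℂ // t.1 ≠ 0 ∧ t.1 * t.2.1 ^ d = 1 ∧ t.1 * t.2.2 ^ d = 1 ∧ t.2.1 ≠ t.2.2}

/-- Isomorphism of such covers fixing the marked points: a reparametrization `z ↦ a z`
of the source (`a ≠ 0`), carrying the marked points onto each other and rescaling `c`. -/
def coverIso (d : ℕ) (p q : TypeThreeCover d) : Prop :=
  ∃ a : ℂ, a ≠ 0 ∧ q.1.2.1 = a * p.1.2.1 ∧ q.1.2.2 = a * p.1.2.2 ∧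
    q.1.1 = p.1.1 / a ^ d

/-!
Reparametrizing the source by `z ↦ a z` scales both marked points by `a`, so the ratio
`x_k / x_j` is an invariant of the isomorphism class, and it is a complete one: two covers
with the same ratio are identified by `a = x_j' / x_j`, which then also matches the
constants `c`, since `c x_j^d = 1`.  The ratio is a `d`-th root of unity different from `1`,
and every such root `ζ` occurs, for `π(z) = z^d` with `x_j = 1`, `x_k = ζ`.  Hence the
classes are counted by the `d - 1` nontrivial `d`-th roots of unity.
-/

lemma IsPrimitiveRoot.natCard_pow_eq_one_and_ne_one {K : Type*} [Field K] [DecidableEq K] {ζ : K} {n : ℕ}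
    (hζ : IsPrimitiveRoot ζ n) (hn : 0 < n) :
    Nat.card {z : K // z ^ n = 1 ∧ z ≠ 1} = n - 1 := by
  have hmem (z : K) : z ∈ (Polynomial.nthRootsFinset n (1 : K)).erase 1 ↔ z ^ n = 1 ∧ z ≠ 1 := by
    rw [Finset.mem_erase, Polynomial.mem_nthRootsFinset hn, and_comm]
  rw [← Nat.card_congr (Equiv.subtypeEquivRight hmem), Nat.card_eq_fintype_card,
    Fintype.card_coe, Finset.card_erase_of_mem (Polynomial.one_mem_nthRootsFinset hn),
    hζ.card_nthRootsFinset]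

namespace TypeThreeCover

variable {d : ℕ}

lemma xj_ne_zero (hd : d ≠ 0) (p : TypeThreeCover d) : p.1.2.1 ≠ 0 := by
  intro h
  simpa [h, zero_pow hd] using p.2.2.1

noncomputable def ratio (p : TypeThreeCover d) : ℂ := p.1.2.2 / p.1.2.1

lemma ratio_pow_eq_one (hd : d ≠ 0) (p : TypeThreeCover d) : p.ratio ^ d = 1 := by
  obtain ⟨hc, hj, hk, -⟩ := p.2
  rw [ratio, div_pow, div_eq_one_iff_eq (pow_ne_zero d (xj_ne_zero hd p))]
  exact mul_left_cancel₀ hc (hk.trans hj.symm)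

lemma ratio_ne_one (hd : d ≠ 0) (p : TypeThreeCover d) : p.ratio ≠ 1 := by
  rw [ratio, Ne, div_eq_one_iff_eq (xj_ne_zero hd p)]
  exact p.2.2.2.2.symm

lemma ratio_eq_of_coverIso {p q : TypeThreeCover d} (h : coverIso d p q) :
    p.ratio = q.ratio := by
  obtain ⟨a, ha, hj, hk, -⟩ := h
  rw [ratio, ratio, hj, hk, mul_div_mul_left _ _ ha]

lemma coverIso_of_ratio_eq (hd : d ≠ 0) {p q : TypeThreeCover d} (h : p.ratio = q.ratio) :
    coverIso d p q := by
  have hp := xj_ne_zero hd p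
  have hq := xj_ne_zero hd q
  refine ⟨q.1.2.1 / p.1.2.1, div_ne_zero hq hp, by field_simp, ?_, ?_⟩
  · rw [ratio, ratio, div_eq_div_iff hp hq] at h
    field_simp
    linear_combination -h
  · rw [div_pow, div_div_eq_mul_div, eq_div_iff (pow_ne_zero d hq)]
    linear_combination q.2.2.1 - p.2.2.1

def ofRoot {z : ℂ} (hz : z ^ d = 1 ∧ z ≠ 1) : TypeThreeCover d :=
  ⟨(1, 1, z), one_ne_zero, by simp, by simp [hz.1], hz.2.symm⟩

lemma ratio_ofRoot {z : ℂ} (hz : z ^ d = 1 ∧ z ≠ 1) : (ofRoot hz).ratio = z := by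
  simp [ofRoot, ratio]

noncomputable def quotRatio (hd : d ≠ 0) : Quot (coverIso d) → {z : ℂ // z ^ d = 1 ∧ z ≠ 1} :=
  Quot.lift (fun p => ⟨p.ratio, p.ratio_pow_eq_one hd, p.ratio_ne_one hd⟩)
    fun _ _ h => Subtype.ext (ratio_eq_of_coverIso h)

lemma quotRatio_bijective (hd : d ≠ 0) : Function.Bijective (quotRatio hd) := by
  refine ⟨fun x y => ?_, fun z => ⟨Quot.mk _ (ofRoot z.2), Subtype.ext (ratio_ofRoot z.2)⟩⟩
  induction x using Quot.ind
  induction y using Quot.ind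
  intro h
  exact Quot.sound (coverIso_of_ratio_eq hd (congrArg Subtype.val h))

end TypeThreeCover

theorem stmt11_general (d₁ d₂ : ℕ) (h1 : 1 ≤ d₁) :
    Nat.card (Quot (coverIso (d₁ + d₂))) = (d₁ + d₂) - 1 := by
  have hd : d₁ + d₂ ≠ 0 := by omega
  rw [Nat.card_eq_of_bijective _ (TypeThreeCover.quotRatio_bijective hd)]
  exact (Complex.isPrimitiveRoot_exp _ hd).natCard_pow_eq_one_and_ne_one (by omega)

/-- The number of degree-`d = d₁ + d₂` covers `π : ℙ¹ → ℙ¹` with `π^*(0) = d₁ x_i + d₂ x_l`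
(collapsed component), `π^*(∞) = d x_p`, `π(x_j) = π(x_k) = 1`, `x_j ≠ x_k`, and no further
ramification, counted up to isomorphism fixing the marked points, is `d − 1`. -/
theorem stmt11 (d₁ d₂ : ℕ) (h1 : 1 ≤ d₁) (h2 : 1 ≤ d₂) :
    Nat.card (Quot (coverIso (d₁ + d₂))) = (d₁ + d₂) - 1 :=
  stmt11_general d₁ d₂ h1
end
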